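/- If H is an induced subgraph of G, then DOM(G) ≥ DOM(H). -/

import Mathlib

open SimpleGraph

variable {V : Type*}

/-- `D` is an orientation of the simple graph `G`: arcs only along edges, and each edge
gets exactly one of its two possible directions. -/
def IsOrientation (G : SimpleGraph V) (D : V → V → Prop) : Prop :=
  (∀ u v, D u v → G.Adj u v) ∧ (∀ u v, G.Adj u v → (D u v ↔ ¬ D v u))

/-- `S` is a dominating set of the digraph `D`. -/
def IsDomSet (D : V → V → Prop) (S : Finset V) : Prop :=
  ∀ v, v ∉ S → ∃ u ∈ S, D u v

/-- Domination number of a digraph. -/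
noncomputable def domNum (D : V → V → Prop) : ℕ :=
  sInf {n | ∃ S : Finset V, S.card = n ∧ IsDomSet D S}

/-- Orientable domination number of a graph. -/
noncomputable def DOM (G : SimpleGraph V) : ℕ :=
  sSup {n | ∃ D : V → V → Prop, IsOrientation G D ∧ domNum D = n}

/-- Independence number. -/
noncomputable def indepNum (G : SimpleGraph V) : ℕ :=
  sSup {n | ∃ S : Finset V, S.card = n ∧ ∀ u ∈ S, ∀ v ∈ S, ¬ G.Adj u v}

/-- Matching number. -/
noncomputable def matchNum (G : SimpleGraph V) : ℕ :=
  sSup {n | ∃ M : Finset (Sym2 V), M.card = n ∧ (∀ e ∈ M, e ∈ G.edgeSet) ∧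
    ∀ e ∈ M, ∀ f ∈ M, e ≠ f → ∀ v, v ∈ e → v ∉ f}

/-- Maximum order of a bipartite induced subgraph. -/
noncomputable def bipNum (G : SimpleGraph V) : ℕ :=
  sSup {n | ∃ s : Finset V, s.card = n ∧ (G.induce (s : Set V)).Colorable 2}

/-- Join of `G` with a single universal vertex (`none`). -/
def joinK1 (G : SimpleGraph V) : SimpleGraph (Option V) :=
  SimpleGraph.fromRel (fun a b => a = none ∨ ∃ u v, a = some u ∧ b = some v ∧ G.Adj u v)

/-- Lexicographic product `G ∘ H`. -/
def lexProd {W : Type*} (G : SimpleGraph V) (H : SimpleGraph W) : SimpleGraph (V × W) :=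
  SimpleGraph.fromRel (fun a b => G.Adj a.1 b.1 ∨ (a.1 = b.1 ∧ H.Adj a.2 b.2))

/-- Corona `G ⊙ H`: vertex `(u, none)` is the vertex `u` of `G`, the vertices `(u, some w)`
form the copy of `H` joined to `u`. -/
def corona {W : Type*} (G : SimpleGraph V) (H : SimpleGraph W) : SimpleGraph (V × Option W) :=
  SimpleGraph.fromRel (fun a b =>
    (a.2 = none ∧ b.2 = none ∧ G.Adj a.1 b.1) ∨
    (a.1 = b.1 ∧ ∃ w w', a.2 = some w ∧ b.2 = some w' ∧ H.Adj w w') ∨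
    (a.1 = b.1 ∧ a.2 = none ∧ b.2 ≠ none))

/-- A digraph is acyclic if it has no directed cycle. -/
def DigraphAcyclic (D : V → V → Prop) : Prop :=
  ¬ ∃ (m : ℕ) (c : ℕ → V), 0 < m ∧ (∀ i < m, D (c i) (c (i + 1))) ∧ c m = c 0

/-- A packing of a digraph: no arc joins two of its vertices and no vertex has two
out-neighbors in it. -/
def IsPacking (D : V → V → Prop) (P : Finset V) : Prop :=
  (∀ u ∈ P, ∀ v ∈ P, ¬ D u v) ∧
  (∀ u ∈ P, ∀ v ∈ P, u ≠ v → ∀ w, ¬ (D w u ∧ D w v))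

/-- Packing number of a digraph. -/
noncomputable def packNum (D : V → V → Prop) : ℕ :=
  sSup {n | ∃ P : Finset V, P.card = n ∧ IsPacking D P}

/-!
Extend an orientation of `G[s]` to `G` by orienting every edge between `s` and its complement
away from `s`, and the edges outside `s` arbitrarily. No arc of the extension enters `s` from
outside, so the trace on `s` of a dominating set of the extension dominates the given orientation
of `G[s]`; hence every value of `γ` on orientations of `G[s]` is attained or exceeded on `G`.
-/

section Orientation

variable {G : SimpleGraph V}

lemma wellOrderingRel_iff_not_swap {u v : V} (h : u ≠ v) :
    WellOrderingRel u v ↔ ¬ WellOrderingRel v u := by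
  refine ⟨fun huv hvu => asymm huv hvu, fun hvu => ?_⟩
  rcases trichotomous_of WellOrderingRel u v with huv | rfl | hvu'
  exacts [huv, absurd rfl h, absurd hvu' hvu]

lemma isOrientation_adj_and {R : V → V → Prop}
    (hR : ∀ u v, G.Adj u v → (R u v ↔ ¬ R v u)) :
    IsOrientation G (fun u v => G.Adj u v ∧ R u v) :=
  ⟨fun _ _ h => h.1, fun u v h => by simpa only [h, h.symm, true_and] using hR u v h⟩

open Classical in
/-- The second disjunct covers the edges leaving `s` (`u ∈ s`, `v ∉ s`) and, through an arbitrary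
well-order, the edges with both ends outside `s`. -/
def extendOrientation (G : SimpleGraph V) (s : Set V) (D : s → s → Prop) : V → V → Prop :=
  fun u v => G.Adj u v ∧
    if h : u ∈ s ∧ v ∈ s then D ⟨u, h.1⟩ ⟨v, h.2⟩ else u ∈ s ∨ (v ∉ s ∧ WellOrderingRel u v)

variable {s : Set V} {D : s → s → Prop}

lemma isOrientation_extendOrientation (hD : IsOrientation (G.induce s) D) :
    IsOrientation G (extendOrientation G s D) := by
  refine isOrientation_adj_and fun u v huv => ?_
  by_cases hu : u ∈ s <;> by_cases hv : v ∈ s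
  · simpa [hu, hv] using hD.2 ⟨u, hu⟩ ⟨v, hv⟩ huv
  · simp [hu, hv]
  · simp [hu, hv]
  · simpa [hu, hv] using wellOrderingRel_iff_not_swap huv.ne

lemma extendOrientation_arcs_into {u v : V} (hv : v ∈ s) (huv : extendOrientation G s D u v) :
    ∃ hu : u ∈ s, D ⟨u, hu⟩ ⟨v, hv⟩ := by
  by_cases hu : u ∈ s
  · exact ⟨hu, by simpa [hu, hv] using huv.2⟩
  · have h := huv.2
    rw [dif_neg fun h => hu h.1] at h
    exact absurd hv (h.resolve_left hu).1

end Orientation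

section Domination

lemma isDomSet_univ [Fintype V] (D : V → V → Prop) : IsDomSet D Finset.univ :=
  fun v hv => absurd (Finset.mem_univ v) hv

lemma domNum_le_card {D : V → V → Prop} {S : Finset V} (hS : IsDomSet D S) :
    domNum D ≤ S.card :=
  Nat.sInf_le ⟨S, rfl, hS⟩

lemma exists_isDomSet_card_eq_domNum [Fintype V] (D : V → V → Prop) :
    ∃ S : Finset V, IsDomSet D S ∧ S.card = domNum D := by
  obtain ⟨S, hcard, hS⟩ :=
    Nat.sInf_mem (s := {n | ∃ S : Finset V, S.card = n ∧ IsDomSet D S})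
      ⟨_, Finset.univ, rfl, isDomSet_univ D⟩
  exact ⟨S, hS, hcard⟩

variable {s : Set V} {D : V → V → Prop} {D' : s → s → Prop}

lemma IsDomSet.subtype [DecidablePred (· ∈ s)]
    (hD : ∀ u v (hv : v ∈ s), D u v → ∃ hu : u ∈ s, D' ⟨u, hu⟩ ⟨v, hv⟩)
    {S : Finset V} (hS : IsDomSet D S) : IsDomSet D' (S.subtype (· ∈ s)) := by
  rintro ⟨v, hv⟩ hvS
  obtain ⟨u, huS, huv⟩ := hS v fun h => hvS (Finset.mem_subtype.mpr h)
  obtain ⟨hu, hD'uv⟩ := hD u v hv huv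
  exact ⟨⟨u, hu⟩, Finset.mem_subtype.mpr huS, hD'uv⟩

lemma domNum_le_domNum_of_arcs_into [Fintype V]
    (hD : ∀ u v (hv : v ∈ s), D u v → ∃ hu : u ∈ s, D' ⟨u, hu⟩ ⟨v, hv⟩) :
    domNum D' ≤ domNum D := by
  classical
  obtain ⟨S, hS, hcard⟩ := exists_isDomSet_card_eq_domNum D
  calc domNum D' ≤ (S.subtype (· ∈ s)).card := domNum_le_card (hS.subtype hD)
    _ ≤ S.card := by rw [Finset.card_subtype]; exact Finset.card_filter_le _ _
    _ = domNum D := hcard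

lemma domNum_le_DOM [Fintype V] {G : SimpleGraph V} (hD : IsOrientation G D) :
    domNum D ≤ DOM G :=
  le_csSup ⟨Fintype.card V, by rintro _ ⟨D, -, rfl⟩; exact domNum_le_card (isDomSet_univ D)⟩
    ⟨D, hD, rfl⟩

end Domination

theorem stmt1 {V : Type*} [Fintype V] (G : SimpleGraph V) (s : Finset V) :
    DOM (G.induce (s : Set V)) ≤ DOM G := by
  refine csSup_le' ?_
  rintro _ ⟨D, hD, rfl⟩
  exact (domNum_le_domNum_of_arcs_into fun _ _ hv => extendOrientation_arcs_into hv).trans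
    (domNum_le_DOM (isOrientation_extendOrientation hD))
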